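/- For every n ∈ ℕ^d and all decorated trees σ, τ: Ψ(σ ↷^n τ) = (1/n!)·Ψ(σ)·(D^{(n)}Ψ(τ)) in ℝ[coord]. -/

import Mathlib

open scoped Classical

noncomputable section

/-- The set of `d`-tuples of natural numbers, `ℕ^d`. -/
abbrev Nd (d : ℕ) : Type := Fin d → ℕ

/-- Multi-indices over `ℕ^d`. -/
abbrev MNd (d : ℕ) : Type := Nd d →₀ ℕ

/-- The coordinate set `coord = (𝔏 × M(ℕ^d)) ⊔ ℕ^d`, with `𝔏 = 𝔏⁻ ∪ {0}`
modelled as `Option Lm` (`none` playing the role of `0`). -/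
abbrev Coord (Lm : Type) (d : ℕ) : Type := (Option Lm × MNd d) ⊕ Nd d

/-- Multi-indices over `coord`. -/
abbrev MCoord (Lm : Type) (d : ℕ) : Type := Coord Lm d →₀ ℕ

/-- Decorated trees: `X n` for `n ∈ ℕ^d`, and `node l r ms ts` representing
`Ξ_l⟨(ms 0, ts 0), …, (ms (r-1), ts (r-1))⟩`. -/
inductive DTree (Lm : Type) (d : ℕ) : Type where
  | X : Nd d → DTree Lm d
  | node : Option Lm → (r : ℕ) → (Fin r → Nd d) → (Fin r → DTree Lm d) → DTree Lm d

variable {Lm : Type} {d : ℕ}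

/-- `n!` for `n ∈ ℕ^d`. -/
def factNd (n : Nd d) : ℕ := ∏ i, (n i).factorial

/-- `k!` for `k ∈ M(ℕ^d)`. -/
def factM (k : MNd d) : ℕ := k.prod fun _ v => v.factorial

/-- The multi-index `k = Σ_j e_{m_j}` of outgoing edge decorations. -/
def kOf {r : ℕ} (ms : Fin r → Nd d) : MNd d := ∑ j, Finsupp.single (ms j) 1

/-- The map `Ψ` on decorated trees. -/
def Psi : DTree Lm d → MvPolynomial (Coord Lm d) ℝ :=
  DTree.rec (motive := fun _ => MvPolynomial (Coord Lm d) ℝ)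
    (fun n => MvPolynomial.C (factNd n : ℝ) * MvPolynomial.X (Sum.inr n))
    (fun l r ms _ts ih =>
      MvPolynomial.C (factM (kOf ms) : ℝ) * MvPolynomial.X (Sum.inl (l, kOf ms)) *
        ∏ j : Fin r, (MvPolynomial.C (1 / (factNd (ms j) : ℝ)) * ih j))

/-- The multi-index `β(τ)` of a decorated tree. -/
def betaOf : DTree Lm d → MCoord Lm d :=
  DTree.rec (motive := fun _ => MCoord Lm d)
    (fun n => Finsupp.single (Sum.inr n) 1)
    (fun l r ms _ts ih =>
      Finsupp.single (Sum.inl (l, kOf ms)) 1 + ∑ j : Fin r, ih j)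

/-- The combinatorial coefficient `C(β)`. -/
def Ccoef (β : MCoord Lm d) : ℝ :=
  β.prod fun x v =>
    match x with
    | Sum.inl (_, k) =>
        ((factM k : ℝ) / (k.prod fun m vm => (factNd m : ℝ) ^ vm)) ^ v
    | Sum.inr n => ((factNd n : ℝ)) ^ v

/-- Grafting `σ ↷^n τ`, with values in the free vector space over decorated
trees (modelled as finitely supported functions `DTree Lm d →₀ ℝ`). -/
def graft (n : Nd d) (σ : DTree Lm d) : DTree Lm d → (DTree Lm d →₀ ℝ) :=
  DTree.rec (motive := fun _ => DTree Lm d →₀ ℝ)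
    (fun n' => if n = n' then Finsupp.single σ 1 else 0)
    (fun l r ms ts ih =>
      Finsupp.single (DTree.node l (r + 1) (Fin.cons n ms) (Fin.cons σ ts)) 1 +
      ∑ j : Fin r,
        (ih j).sum fun τ' c =>
          Finsupp.single (DTree.node l r ms (Function.update ts j τ')) c)

/-- Linear extension of `Ψ` to the free vector space over decorated trees. -/
def PsiHat (f : DTree Lm d →₀ ℝ) : MvPolynomial (Coord Lm d) ℝ :=
  f.sum fun τ c => c • Psi τ

/-- The derivation `D^{(n)}` of `ℝ[coord]` determined by
`D^{(n)} z_{(l,k)} = (k(n)+1)·z_{(l,k+e_n)}` and `D^{(n)} z_{n'} = δ_{n,n'}`. -/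
def derivD (n : Nd d) :
    Derivation ℝ (MvPolynomial (Coord Lm d) ℝ) (MvPolynomial (Coord Lm d) ℝ) :=
  MvPolynomial.mkDerivation ℝ fun ι =>
    match ι with
    | Sum.inl (l, k) =>
        MvPolynomial.C ((k n : ℝ) + 1) *
          MvPolynomial.X (Sum.inl (l, k + Finsupp.single n 1))
    | Sum.inr n' => if n = n' then 1 else 0


/-!
Writing `Ψ(Ξ_l⟨(m₁,τ₁),…,(m_r,τ_r)⟩) = (k!/∏ⱼ mⱼ!) · z_{(l,k)} · ∏ⱼ Ψ(τⱼ)`, the Leibniz rule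
splits `D⁽ⁿ⁾Ψ(τ)` into the term where `D⁽ⁿ⁾` hits the root variable and the terms where it hits
some `Ψ(τⱼ)`. Grafting `σ` at the root turns `k` into `k + eₙ`, which multiplies the weight by
`(k(n)+1)/n!`: this is the root term, since `D⁽ⁿ⁾z_{(l,k)} = (k(n)+1) z_{(l,k+eₙ)}`. Grafting into
the `j`-th subtree gives the `j`-th term by induction, because `Ψ` of a node is linear in each
`Ψ(τⱼ)`. At a leaf `Xⁿ'` both sides equal `δ_{n,n'} Ψ(σ)`.
-/

open MvPolynomial

theorem Derivation.leibniz_finset_prod {R A : Type*} [CommSemiring R] [CommSemiring A]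
    [Algebra R A] (D : Derivation R A A) {ι : Type*} [DecidableEq ι] (s : Finset ι)
    (f : ι → A) : D (∏ i ∈ s, f i) = ∑ i ∈ s, (∏ j ∈ s.erase i, f j) * D (f i) := by
  induction s using Finset.induction with
  | empty => simp
  | insert a s ha ih =>
    rw [Finset.prod_insert ha, D.leibniz, smul_eq_mul, smul_eq_mul, ih, Finset.mul_sum,
      Finset.sum_insert ha, Finset.erase_insert ha, add_comm]
    congr 1
    refine Finset.sum_congr rfl fun i hi => ?_
    rw [Finset.erase_insert_of_ne (ne_of_mem_of_not_mem hi ha).symm,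
      Finset.prod_insert fun h => ha (Finset.mem_of_mem_erase h), mul_assoc]

theorem factNd_cast_ne_zero (n : Nd d) : (factNd n : ℝ) ≠ 0 :=
  Nat.cast_ne_zero.mpr (Finset.prod_pos fun _ _ => Nat.factorial_pos _).ne'

theorem kOf_cons (n : Nd d) {r : ℕ} (ms : Fin r → Nd d) :
    kOf (Fin.cons n ms) = kOf ms + Finsupp.single n 1 := by
  simp [kOf, Fin.sum_univ_succ, add_comm]

theorem factM_add_single (k : MNd d) (n : Nd d) :
    factM (k + Finsupp.single n 1) = (k n + 1) * factM k := by
  unfold factM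
  rw [← Finsupp.mul_prod_erase' k n _ (fun _ => rfl),
    ← Finsupp.mul_prod_erase' (k + Finsupp.single n 1) n _ (fun _ => rfl),
    Finsupp.erase_add, Finsupp.erase_single, add_zero]
  simp [Nat.factorial_succ, mul_assoc]

def nodeWeight {r : ℕ} (ms : Fin r → Nd d) : ℝ :=
  factM (kOf ms) / ∏ j, (factNd (ms j) : ℝ)

theorem nodeWeight_cons (n : Nd d) {r : ℕ} (ms : Fin r → Nd d) :
    nodeWeight (Fin.cons n ms) = 1 / factNd n * nodeWeight ms * (kOf ms n + 1) := by
  simp only [nodeWeight, kOf_cons, factM_add_single, Fin.prod_univ_succ, Fin.cons_zero,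
    Fin.cons_succ]
  push_cast
  ring

theorem derivD_C_mul (n : Nd d) (a : ℝ) (p : MvPolynomial (Coord Lm d) ℝ) :
    derivD n (C a * p) = C a * derivD n p := by
  rw [C_mul', Derivation.map_smul, C_mul']

theorem derivD_X_inl (n : Nd d) (l : Option Lm) (k : MNd d) :
    derivD n (X (Sum.inl (l, k))) =
      C ((k n : ℝ) + 1) * X (Sum.inl (l, k + Finsupp.single n 1)) :=
  mkDerivation_X _ _ _

theorem derivD_X_inr (n n' : Nd d) :
    derivD n (X (Sum.inr n') : MvPolynomial (Coord Lm d) ℝ) = if n = n' then 1 else 0 :=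
  mkDerivation_X _ _ _

theorem Psi_node (l : Option Lm) {r : ℕ} (ms : Fin r → Nd d) (ts : Fin r → DTree Lm d) :
    Psi (DTree.node l r ms ts) =
      C (nodeWeight ms) * X (Sum.inl (l, kOf ms)) * ∏ j, Psi (ts j) := by
  change C (factM (kOf ms) : ℝ) * X (Sum.inl (l, kOf ms)) *
      ∏ j, (C (1 / (factNd (ms j) : ℝ)) * Psi (ts j)) = _
  rw [Finset.prod_mul_distrib, ← map_prod, nodeWeight, div_eq_mul_one_div _ (∏ j, _),
    Finset.prod_div_distrib, Finset.prod_const_one, map_mul]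
  ring

theorem Psi_node_cons (n : Nd d) (σ : DTree Lm d) (l : Option Lm) {r : ℕ}
    (ms : Fin r → Nd d) (ts : Fin r → DTree Lm d) :
    Psi (DTree.node l (r + 1) (Fin.cons n ms) (Fin.cons σ ts)) =
      C (1 / (factNd n : ℝ)) * Psi σ *
        (C (nodeWeight ms) * derivD n (X (Sum.inl (l, kOf ms))) * ∏ j, Psi (ts j)) := by
  rw [Psi_node, nodeWeight_cons, kOf_cons, Fin.prod_univ_succ, derivD_X_inl]
  simp only [Fin.cons_zero, Fin.cons_succ, map_mul]
  ring

theorem derivD_Psi_node (n : Nd d) (l : Option Lm) {r : ℕ} (ms : Fin r → Nd d)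
    (ts : Fin r → DTree Lm d) :
    derivD n (Psi (DTree.node l r ms ts)) = C (nodeWeight ms) *
      (derivD n (X (Sum.inl (l, kOf ms))) * ∏ j, Psi (ts j) +
        X (Sum.inl (l, kOf ms)) *
          ∑ j, (∏ i ∈ Finset.univ.erase j, Psi (ts i)) * derivD n (Psi (ts j))) := by
  rw [Psi_node, mul_assoc, derivD_C_mul, Derivation.leibniz, Derivation.leibniz_finset_prod,
    smul_eq_mul, smul_eq_mul]
  ring

theorem PsiHat_eq_linearCombination (f : DTree Lm d →₀ ℝ) :
    PsiHat f = Finsupp.linearCombination ℝ Psi f :=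
  (Finsupp.linearCombination_apply ℝ f).symm

theorem PsiHat_sum_single_update (l : Option Lm) {r : ℕ} (ms : Fin r → Nd d)
    (ts : Fin r → DTree Lm d) (j : Fin r) (f : DTree Lm d →₀ ℝ) :
    PsiHat (f.sum fun τ c => Finsupp.single (DTree.node l r ms (Function.update ts j τ)) c) =
      C (nodeWeight ms) * X (Sum.inl (l, kOf ms)) *
        (∏ i ∈ Finset.univ.erase j, Psi (ts i)) * PsiHat f := by
  have hPsi : ∀ τ, Psi (DTree.node l r ms (Function.update ts j τ)) =
      C (nodeWeight ms) * X (Sum.inl (l, kOf ms)) *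
        (∏ i ∈ Finset.univ.erase j, Psi (ts i)) * Psi τ := by
    intro τ
    rw [Psi_node, ← Finset.mul_prod_erase _ _ (Finset.mem_univ j), Function.update_self,
      Finset.prod_congr rfl fun _ hi => by rw [Function.update_of_ne (Finset.ne_of_mem_erase hi)]]
    ring
  rw [PsiHat_eq_linearCombination, map_finsuppSum, PsiHat, Finsupp.mul_sum]
  simp only [Finsupp.linearCombination_single, hPsi, mul_smul_comm]

theorem graft_node (n : Nd d) (σ : DTree Lm d) (l : Option Lm) {r : ℕ} (ms : Fin r → Nd d)
    (ts : Fin r → DTree Lm d) :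
    graft n σ (DTree.node l r ms ts) =
      Finsupp.single (DTree.node l (r + 1) (Fin.cons n ms) (Fin.cons σ ts)) 1 +
        ∑ j, (graft n σ (ts j)).sum fun τ c =>
          Finsupp.single (DTree.node l r ms (Function.update ts j τ)) c :=
  rfl

theorem PsiHat_graft_X (n n' : Nd d) (σ : DTree Lm d) :
    PsiHat (graft n σ (DTree.X n')) =
      C (1 / (factNd n : ℝ)) * (Psi σ * derivD n (Psi (DTree.X n'))) := by
  change PsiHat (if n = n' then Finsupp.single σ 1 else 0) =
    C (1 / (factNd n : ℝ)) * (Psi σ * derivD n (C (factNd n' : ℝ) * X (Sum.inr n')))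
  rw [derivD_C_mul, derivD_X_inr]
  split_ifs with h
  · subst h
    rw [PsiHat_eq_linearCombination, Finsupp.linearCombination_single, one_smul, mul_one,
      mul_left_comm, ← map_mul, one_div_mul_cancel (factNd_cast_ne_zero n), map_one, mul_one]
  · simp [PsiHat]

theorem stmt19_general {Lm : Type} {d : ℕ}
    (n : Nd d) (σ τ : DTree Lm d) :
    PsiHat (graft n σ τ) =
      MvPolynomial.C (1 / (factNd n : ℝ)) * (Psi σ * derivD n (Psi τ)) := by
  induction τ with
  | X n' => exact PsiHat_graft_X n n' σ
  | node l r ms ts ih =>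
    rw [graft_node, PsiHat_eq_linearCombination]
    simp only [map_add, map_sum, Finsupp.linearCombination_single, one_smul,
      ← PsiHat_eq_linearCombination]
    rw [Psi_node_cons, derivD_Psi_node]
    simp only [PsiHat_sum_single_update, ih, mul_add, Finset.mul_sum]
    exact congrArg₂ (· + ·) (by ring) (Finset.sum_congr rfl fun j _ => by ring)

theorem stmt19 {Lm : Type} [Fintype Lm] {d : ℕ} (hd : 1 ≤ d)
    (n : Nd d) (σ τ : DTree Lm d) :
    PsiHat (graft n σ τ) =
      MvPolynomial.C (1 / (factNd n : ℝ)) * (Psi σ * derivD n (Psi τ)) :=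
  stmt19_general n σ τ
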